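/- arXiv:2403.18284 — 2 statements merged into one kernel-verified Lean document; each statement's English description precedes it below -/
import Mathlib

section
/- Suppose Assumption 1 holds, fix U⁰ ∈ F, and let L := { U ∈ F : g(U) ≥ g(U⁰) }. Then the set { X(U) : U ∈ L } is bounded; moreover, there exist constants 0 < β_min ≤ β_max such that β_min·I ⪯ X(U) ⪯ β_max·I for all U ∈ L. -/
/-!
Let `X̂ ≻ 0` with `𝒜(X̂) = b`, let `c > 0` be below its spectrum, and write `P = C + B(U)`.
Pairing with `X̂` turns `bᵀy` into `X̂ • (C + W/2 + S - P)`, and `X̂ • W`, `X̂ • S` are bounded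
on `M`, so on the level set `c tr P - μ log det P ≤ X̂ • P - μ log det P` is bounded above.
As `t ↦ c t - μ log t` is bounded below and tends to `+∞` at `0` and at `∞`, every eigenvalue
of `P` lies in a fixed interval `[α, β] ⊂ (0, ∞)`, so the spectrum of `X(U) = μ P⁻¹` lies in
`[μ/β, μ/α]`.
-/

open Matrix

noncomputable section

/-- Frobenius norm of a matrix. -/
def frobNorm {k : ℕ} (X : Matrix (Fin k) (Fin k) ℝ) : ℝ :=
  Real.sqrt (∑ i, ∑ j, X i j ^ 2)

/-- The trace inner product `A • B = Σ_{i,j} A_{ij} B_{ij}`. -/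
def minner {k : ℕ} (A B : Matrix (Fin k) (Fin k) ℝ) : ℝ := ∑ i, ∑ j, A i j * B i j

/-- The linear map `Q : S^n → S^{n̄}`, `[Q(X)]_{ab} = X_{K*(a)} − X_{K*(b)}` for `a < b`,
extended symmetrically with zero diagonal, where `K* = e` enumerates the strictly
upper-triangular positions. -/
def Qmap {n : ℕ} (e : Fin (n * (n - 1) / 2) ≃ {p : Fin n × Fin n // p.1 < p.2})
    (X : Matrix (Fin n) (Fin n) ℝ) :
    Matrix (Fin (n * (n - 1) / 2)) (Fin (n * (n - 1) / 2)) ℝ :=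
  fun a b =>
    if a < b then X (e a).1.1 (e a).1.2 - X (e b).1.1 (e b).1.2
    else if b < a then X (e b).1.1 (e b).1.2 - X (e a).1.1 (e a).1.2
    else 0

/-- The adjoint `Qᵀ : S^{n̄} → S^n`:
`[Qᵀ(Z)]_{ij} = Σ_{l > K(i,j)} Z_{K(i,j),l} − Σ_{l < K(i,j)} Z_{l,K(i,j)}` for `i < j`,
extended symmetrically with zero diagonal. -/
def QTmap {n : ℕ} (e : Fin (n * (n - 1) / 2) ≃ {p : Fin n × Fin n // p.1 < p.2})
    (Z : Matrix (Fin (n * (n - 1) / 2)) (Fin (n * (n - 1) / 2)) ℝ) :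
    Matrix (Fin n) (Fin n) ℝ :=
  fun i j =>
    if h : i < j then
      (∑ l, if e.symm ⟨(i, j), h⟩ < l then Z (e.symm ⟨(i, j), h⟩) l else 0)
        - ∑ l, if l < e.symm ⟨(i, j), h⟩ then Z l (e.symm ⟨(i, j), h⟩) else 0
    else if h' : j < i then
      (∑ l, if e.symm ⟨(j, i), h'⟩ < l then Z (e.symm ⟨(j, i), h'⟩) l else 0)
        - ∑ l, if l < e.symm ⟨(j, i), h'⟩ then Z l (e.symm ⟨(j, i), h'⟩) else 0
    else 0

/-- The set `𝒮 = {S ∈ S^n : S = Qᵀ(Z), ‖Z‖_∞ ≤ λ}`. -/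
def Sset {n : ℕ} (lam : ℝ) (e : Fin (n * (n - 1) / 2) ≃ {p : Fin n × Fin n // p.1 < p.2}) :
    Set (Matrix (Fin n) (Fin n) ℝ) :=
  {S | ∃ Z : Matrix (Fin (n * (n - 1) / 2)) (Fin (n * (n - 1) / 2)) ℝ,
    Z.IsSymm ∧ (∀ a b, |Z a b| ≤ lam) ∧ S = QTmap e Z}

/-- Euclidean norm on `ℝ^m`. -/
def eunorm {k : ℕ} (y : Fin k → ℝ) : ℝ := Real.sqrt (∑ i, y i ^ 2)

/-- The set `𝒲 = {W ∈ S^n : ‖W‖_∞ ≤ ρ}`. -/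
def Wset {n : ℕ} (ρ : ℝ) : Set (Matrix (Fin n) (Fin n) ℝ) :=
  {W | W.IsSymm ∧ ∀ i j, |W i j| ≤ ρ}

/-- The linear map `𝒜(X) = (A_1 • X, …, A_m • X)`. -/
def AAmap {n m : ℕ} (A : Fin m → Matrix (Fin n) (Fin n) ℝ)
    (X : Matrix (Fin n) (Fin n) ℝ) : Fin m → ℝ := fun i => minner (A i) X

/-- The adjoint `𝒜ᵀ(y) = Σ_i y_i A_i`. -/
def ATmap {n m : ℕ} (A : Fin m → Matrix (Fin n) (Fin n) ℝ) (y : Fin m → ℝ) :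
    Matrix (Fin n) (Fin n) ℝ := ∑ i, y i • A i

/-- `B(U) = −𝒜ᵀ(y) + W/2 + S` for `U = (y, W, S)`. -/
def Bmap {n m : ℕ} (A : Fin m → Matrix (Fin n) (Fin n) ℝ)
    (U : (Fin m → ℝ) × Matrix (Fin n) (Fin n) ℝ × Matrix (Fin n) (Fin n) ℝ) :
    Matrix (Fin n) (Fin n) ℝ :=
  -(ATmap A U.1) + (1 / 2 : ℝ) • U.2.1 + U.2.2

/-- The dual objective `g(U) = bᵀy + μ log det(C + B(U)) + nμ − nμ log μ`. -/
def gfun {n m : ℕ} (A : Fin m → Matrix (Fin n) (Fin n) ℝ) (b : Fin m → ℝ)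
    (C : Matrix (Fin n) (Fin n) ℝ) (μ : ℝ)
    (U : (Fin m → ℝ) × Matrix (Fin n) (Fin n) ℝ × Matrix (Fin n) (Fin n) ℝ) : ℝ :=
  (∑ i, b i * U.1 i) + μ * Real.log (C + Bmap A U).det
    + (n : ℝ) * μ - (n : ℝ) * μ * Real.log μ

/-- `X(U) = μ (C + B(U))⁻¹`. -/
def XofU {n m : ℕ} (A : Fin m → Matrix (Fin n) (Fin n) ℝ)
    (C : Matrix (Fin n) (Fin n) ℝ) (μ : ℝ)
    (U : (Fin m → ℝ) × Matrix (Fin n) (Fin n) ℝ × Matrix (Fin n) (Fin n) ℝ) :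
    Matrix (Fin n) (Fin n) ℝ := μ • (C + Bmap A U)⁻¹

/-- The set `M = ℝ^m × 𝒲 × 𝒮`. -/
def Mset {n : ℕ} (m : ℕ) (ρ lam : ℝ)
    (e : Fin (n * (n - 1) / 2) ≃ {p : Fin n × Fin n // p.1 < p.2}) :
    Set ((Fin m → ℝ) × Matrix (Fin n) (Fin n) ℝ × Matrix (Fin n) (Fin n) ℝ) :=
  {U | U.2.1 ∈ Wset ρ ∧ U.2.2 ∈ Sset lam e}

/-- The set `N = {U : C + B(U) ≻ 0}`. -/
def Nset {n m : ℕ} (A : Fin m → Matrix (Fin n) (Fin n) ℝ)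
    (C : Matrix (Fin n) (Fin n) ℝ) :
    Set ((Fin m → ℝ) × Matrix (Fin n) (Fin n) ℝ × Matrix (Fin n) (Fin n) ℝ) :=
  {U | (C + Bmap A U).PosDef}

/-- The feasible set `F = M ∩ N`. -/
def Fset {n m : ℕ} (ρ lam : ℝ)
    (e : Fin (n * (n - 1) / 2) ≃ {p : Fin n × Fin n // p.1 < p.2})
    (A : Fin m → Matrix (Fin n) (Fin n) ℝ) (C : Matrix (Fin n) (Fin n) ℝ) :
    Set ((Fin m → ℝ) × Matrix (Fin n) (Fin n) ℝ × Matrix (Fin n) (Fin n) ℝ) :=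
  Mset m ρ lam e ∩ Nset A C

/-- The norm `‖U‖ = √(‖y‖² + ‖W‖_F² + ‖S‖_F²)` on `ℝ^m × S^n × S^n`. -/
def normU {n m : ℕ}
    (U : (Fin m → ℝ) × Matrix (Fin n) (Fin n) ℝ × Matrix (Fin n) (Fin n) ℝ) : ℝ :=
  Real.sqrt (eunorm U.1 ^ 2 + frobNorm U.2.1 ^ 2 + frobNorm U.2.2 ^ 2)

open scoped MatrixOrder

section Scalar

lemma mul_log_le_mul_log_add {μ s t : ℝ} (hμ : 0 ≤ μ) (hs : 0 < s) (ht : 0 < t) :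
    μ * Real.log t ≤ μ * Real.log s + μ * (t / s - 1) := by
  have h := Real.log_le_sub_one_of_pos (div_pos ht hs)
  rw [Real.log_div ht.ne' hs.ne'] at h
  nlinarith

lemma le_sub_mul_of_sum_le {ι : Type*} [Fintype ι] [DecidableEq ι] {f : ι → ℝ} {m K : ℝ}
    (hm : ∀ i, m ≤ f i) (h : ∑ i, f i ≤ K) (i : ι) :
    f i ≤ K - (Fintype.card ι - 1) * m := by
  have hrest := Finset.card_nsmul_le_sum (Finset.univ.erase i) f m fun j _ => hm j
  rw [nsmul_eq_mul, Finset.card_erase_of_mem (Finset.mem_univ i), Finset.card_univ,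
    Nat.cast_pred (Fintype.card_pos_iff.mpr ⟨i⟩)] at hrest
  linarith [Finset.add_sum_erase _ f (Finset.mem_univ i)]

variable {c μ : ℝ} (hc : 0 < c) (hμ : 0 < μ)
include hc hμ

lemma sub_mul_log_le_mul_sub_mul_log {t : ℝ} (ht : 0 < t) :
    μ - μ * Real.log (μ / c) ≤ c * t - μ * Real.log t := by
  have h := mul_log_le_mul_log_add hμ.le (div_pos hμ hc) ht
  have hμt : μ * (t / (μ / c)) = c * t := by field_simp
  rw [mul_sub, hμt] at h
  linarith

lemma mem_Icc_of_mul_sub_mul_log_le {t K : ℝ} (ht : 0 < t) (h : c * t - μ * Real.log t ≤ K) :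
    t ∈ Set.Icc (Real.exp (-(K / μ))) (2 / c * (K - μ + μ * Real.log (2 * μ / c))) := by
  constructor
  · rw [← Real.exp_log ht, Real.exp_le_exp, neg_le, le_div_iff₀ hμ]
    nlinarith [mul_pos hc ht]
  · have h' := mul_log_le_mul_log_add hμ.le (div_pos (mul_pos two_pos hμ) hc) ht
    have hμt : μ * (t / (2 * μ / c)) = c * t / 2 := by field_simp
    rw [mul_sub, hμt] at h'
    rw [div_mul_eq_mul_div, le_div_iff₀ hc]
    linarith

lemma exists_bounds_of_sum_mul_sub_mul_log_le (ι : Type*) [Fintype ι] (K : ℝ) :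
    ∃ a b : ℝ, 0 < a ∧ a ≤ b ∧ ∀ t : ι → ℝ, (∀ i, 0 < t i) →
      ∑ i, (c * t i - μ * Real.log (t i)) ≤ K → ∀ i, a ≤ t i ∧ t i ≤ b := by
  classical
  set K' := K - (Fintype.card ι - 1) * (μ - μ * Real.log (μ / c))
  refine ⟨Real.exp (-(K' / μ)), max (Real.exp (-(K' / μ)))
    (2 / c * (K' - μ + μ * Real.log (2 * μ / c))), Real.exp_pos _, le_max_left _ _,
    fun t ht hsum i => ?_⟩
  have hi := le_sub_mul_of_sum_le (fun j => sub_mul_log_le_mul_sub_mul_log hc hμ (ht j)) hsum i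
  obtain ⟨hlo, hhi⟩ := mem_Icc_of_mul_sub_mul_log_le hc hμ (ht i) hi
  exact ⟨hlo, hhi.trans (le_max_right _ _)⟩

end Scalar

section Spectrum

variable {ι : Type*} [Fintype ι] [DecidableEq ι]

lemma Matrix.PosSemidef.trace_mul_nonneg {X P : Matrix ι ι ℝ} (hX : X.PosSemidef)
    (hP : P.PosSemidef) : 0 ≤ (X * P).trace := by
  obtain ⟨B, rfl⟩ := CStarAlgebra.nonneg_iff_eq_star_mul_self.mp hX.nonneg
  rw [Matrix.mul_assoc, Matrix.trace_mul_comm]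
  exact (hP.mul_mul_conjTranspose_same B).trace_nonneg

lemma exists_spectrum_bounds_of_mul_trace_sub_mul_log_det_le {c μ : ℝ} (hc : 0 < c)
    (hμ : 0 < μ) (K : ℝ) : ∃ a b : ℝ, 0 < a ∧ a ≤ b ∧ ∀ P : Matrix ι ι ℝ, P.PosDef →
      c * P.trace - μ * Real.log P.det ≤ K → ∀ x ∈ spectrum ℝ P, a ≤ x ∧ x ≤ b := by
  obtain ⟨a, b, ha, hab, hbound⟩ := exists_bounds_of_sum_mul_sub_mul_log_le hc hμ ι K
  refine ⟨a, b, ha, hab, fun P hP hK x hx => ?_⟩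
  rw [hP.isHermitian.spectrum_real_eq_range_eigenvalues] at hx
  obtain ⟨i, rfl⟩ := hx
  refine hbound _ hP.eigenvalues_pos ?_ i
  rw [hP.isHermitian.trace_eq_sum_eigenvalues, hP.isHermitian.det_eq_prod_eigenvalues] at hK
  simp only [RCLike.ofReal_real_eq_id, id_eq] at hK
  rw [Real.log_prod fun j _ => (hP.eigenvalues_pos j).ne'] at hK
  rwa [Finset.sum_sub_distrib, ← Finset.mul_sum, ← Finset.mul_sum]

lemma Matrix.PosDef.spectrum_ne_zero {P : Matrix ι ι ℝ} (hP : P.PosDef) :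
    ∀ x ∈ spectrum ℝ P, x ≠ 0 := fun _ hx =>
  (hP.isStrictlyPositive.spectrum_pos hx).ne'

lemma Matrix.PosDef.smul_inv_eq_cfc {P : Matrix ι ι ℝ} (hP : P.PosDef) (μ : ℝ) :
    μ • P⁻¹ = cfc (fun x => μ / x) P := by
  simp_rw [div_eq_mul_inv]
  rw [cfc_const_mul _ _ _ (continuousOn_inv₀.mono hP.spectrum_ne_zero), ← hP.isUnit.unit_spec,
    cfc_inv_id hP.isUnit.unit, coe_units_inv]

lemma Matrix.PosDef.spectrum_smul_inv {P : Matrix ι ι ℝ} (hP : P.PosDef) (μ : ℝ) :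
    spectrum ℝ (μ • P⁻¹) = (fun x => μ / x) '' spectrum ℝ P := by
  rw [hP.smul_inv_eq_cfc]
  exact cfc_map_spectrum (p := IsSelfAdjoint) (ha := hP.isHermitian.isSelfAdjoint)
    (hf := continuousOn_const.div continuousOn_id hP.spectrum_ne_zero)

lemma Matrix.IsHermitian.posSemidef_sub_smul_one {Y : Matrix ι ι ℝ} (hY : Y.IsHermitian)
    {r : ℝ} (h : ∀ x ∈ spectrum ℝ Y, r ≤ x) : (Y - r • 1).PosSemidef := by
  rw [← Matrix.le_iff, ← Algebra.algebraMap_eq_smul_one]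
  exact (algebraMap_le_iff_le_spectrum hY.isSelfAdjoint).2 h

lemma Matrix.IsHermitian.posSemidef_smul_one_sub {Y : Matrix ι ι ℝ} (hY : Y.IsHermitian)
    {r : ℝ} (h : ∀ x ∈ spectrum ℝ Y, x ≤ r) : (r • 1 - Y).PosSemidef := by
  rw [← Matrix.le_iff, ← Algebra.algebraMap_eq_smul_one]
  exact (le_algebraMap_iff_spectrum_le hY.isSelfAdjoint).2 h

lemma Matrix.IsHermitian.sum_sq_eq_trace_sq {Y : Matrix ι ι ℝ} (hY : Y.IsHermitian) :
    ∑ i, ∑ j, Y i j ^ 2 = (Y ^ 2).trace := by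
  simp only [Matrix.trace, Matrix.diag, sq, Matrix.mul_apply]
  refine Finset.sum_congr rfl fun i _ => Finset.sum_congr rfl fun j _ => ?_
  rw [← hY.apply i j, star_trivial]

lemma Matrix.PosDef.exists_pos_posSemidef_sub_smul_one [Nonempty ι] {X : Matrix ι ι ℝ}
    (hX : X.PosDef) : ∃ c : ℝ, 0 < c ∧ (X - c • 1).PosSemidef := by
  simp_rw [← Matrix.le_iff, ← Algebra.algebraMap_eq_smul_one]
  exact (CFC.exists_pos_algebraMap_le_iff hX.isHermitian.isSelfAdjoint).2
    fun _ hx => hX.isStrictlyPositive.spectrum_pos hx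

end Spectrum

lemma frobNorm_le_of_spectrum {k : ℕ} {Y : Matrix (Fin k) (Fin k) ℝ} (hY : Y.IsHermitian)
    {r : ℝ} (h : ∀ x ∈ spectrum ℝ Y, x ^ 2 ≤ r) : frobNorm Y ≤ √(k * r) := by
  have hsq : (r • 1 - Y ^ 2).PosSemidef := by
    rw [← Matrix.le_iff, ← Algebra.algebraMap_eq_smul_one,
      ← cfc_pow_id (R := ℝ) Y 2 hY.isSelfAdjoint]
    exact (cfc_le_algebraMap_iff _ _ _).2 h
  refine Real.sqrt_le_sqrt ?_
  have := hsq.trace_nonneg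
  rw [trace_sub, trace_smul, trace_one, Fintype.card_fin, smul_eq_mul] at this
  rw [hY.sum_sq_eq_trace_sq]
  linarith

lemma minner_comm {k : ℕ} (X Y : Matrix (Fin k) (Fin k) ℝ) : minner X Y = minner Y X := by
  simp only [minner, mul_comm]

lemma minner_eq_trace {k : ℕ} (X Y : Matrix (Fin k) (Fin k) ℝ) :
    minner X Y = (Xᵀ * Y).trace := by
  simp only [minner, Matrix.trace, Matrix.diag, Matrix.mul_apply, Matrix.transpose_apply]
  exact Finset.sum_comm

lemma mul_trace_le_minner {k : ℕ} {X P : Matrix (Fin k) (Fin k) ℝ} {c : ℝ}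
    (hX : (X - c • 1).PosSemidef) (hP : P.PosSemidef) : c * P.trace ≤ minner X P := by
  have h := hP.trace_mul_nonneg hX
  have hPt : Pᵀ = P := by
    simpa [conjTranspose_eq_transpose_of_trivial] using hP.isHermitian.eq
  rw [Matrix.mul_sub, trace_sub, Matrix.mul_smul, Matrix.mul_one, trace_smul, smul_eq_mul] at h
  rw [minner_comm, minner_eq_trace, hPt]
  linarith

lemma abs_minner_le {k : ℕ} {X M : Matrix (Fin k) (Fin k) ℝ} {r : ℝ}
    (h : ∀ i j, |M i j| ≤ r) : |minner X M| ≤ (∑ i, ∑ j, |X i j|) * r := by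
  rw [minner, Finset.sum_mul]
  refine (Finset.abs_sum_le_sum_abs _ _).trans (Finset.sum_le_sum fun i _ => ?_)
  rw [Finset.sum_mul]
  refine (Finset.abs_sum_le_sum_abs _ _).trans (Finset.sum_le_sum fun j _ => ?_)
  rw [abs_mul]
  exact mul_le_mul_of_nonneg_left (h i j) (abs_nonneg _)

section LevelSet

variable {n m : ℕ} {A : Fin m → Matrix (Fin n) (Fin n) ℝ} {b : Fin m → ℝ}
  {X : Matrix (Fin n) (Fin n) ℝ}

lemma minner_ATmap (hX : AAmap A X = b) (y : Fin m → ℝ) :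
    minner X (ATmap A y) = ∑ i, b i * y i := by
  rw [minner_eq_trace, ATmap, Matrix.mul_sum, trace_sum]
  refine Finset.sum_congr rfl fun i _ => ?_
  rw [Matrix.mul_smul, trace_smul, ← minner_eq_trace, minner_comm, ← hX, smul_eq_mul, mul_comm]
  rfl

lemma minner_add_Bmap (hX : AAmap A X = b) (C : Matrix (Fin n) (Fin n) ℝ)
    (U : (Fin m → ℝ) × Matrix (Fin n) (Fin n) ℝ × Matrix (Fin n) (Fin n) ℝ) :
    minner X (C + Bmap A U) =
      minner X C - ∑ i, b i * U.1 i + minner X U.2.1 / 2 + minner X U.2.2 := by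
  have hy := minner_ATmap hX U.1
  simp only [minner_eq_trace, Bmap, Matrix.mul_add, Matrix.mul_neg, Matrix.mul_smul, trace_add,
    trace_neg, trace_smul, smul_eq_mul] at hy ⊢
  rw [hy]
  ring

lemma abs_QTmap_apply_le (e : Fin (n * (n - 1) / 2) ≃ {p : Fin n × Fin n // p.1 < p.2})
    {Z : Matrix (Fin (n * (n - 1) / 2)) (Fin (n * (n - 1) / 2)) ℝ} {lam : ℝ} (hlam : 0 ≤ lam)
    (hZ : ∀ a b, |Z a b| ≤ lam) (i j : Fin n) :
    |QTmap e Z i j| ≤ 2 * ((n * (n - 1) / 2 : ℕ) : ℝ) * lam := by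
  have hsum : ∀ f : Fin (n * (n - 1) / 2) → ℝ, (∀ l, |f l| ≤ lam) →
      |∑ l, f l| ≤ ((n * (n - 1) / 2 : ℕ) : ℝ) * lam := fun f hf => by
    simpa using (Finset.abs_sum_le_sum_abs _ _).trans
      (Finset.sum_le_sum fun l (_ : l ∈ Finset.univ) => hf l)
  have hite : ∀ (q : Prop) [Decidable q] (x : ℝ), |x| ≤ lam → |if q then x else 0| ≤ lam :=
    fun q _ x hx => by split_ifs <;> simp [hx, hlam]
  unfold QTmap
  split_ifs
  any_goals exact (abs_sub _ _).trans ((add_le_add (hsum _ fun l => hite _ _ (hZ _ l))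
    (hsum _ fun l => hite _ _ (hZ l _))).trans_eq (by ring))
  simp only [abs_zero]
  positivity

lemma minner_sub_mul_log_det_le (hX : AAmap A X = b) (C : Matrix (Fin n) (Fin n) ℝ) (μ : ℝ)
    {ρ lam : ℝ} (hlam : 0 ≤ lam) (e : Fin (n * (n - 1) / 2) ≃ {p : Fin n × Fin n // p.1 < p.2})
    {U : (Fin m → ℝ) × Matrix (Fin n) (Fin n) ℝ × Matrix (Fin n) (Fin n) ℝ}
    (hU : U ∈ Mset m ρ lam e) :
    minner X (C + Bmap A U) - μ * Real.log (C + Bmap A U).det ≤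
      minner X C + (∑ i, ∑ j, |X i j|) * (ρ / 2 + 2 * ((n * (n - 1) / 2 : ℕ) : ℝ) * lam)
        + n * μ - n * μ * Real.log μ - gfun A b C μ U := by
  obtain ⟨⟨-, hW⟩, Z, -, hZ, hS⟩ := hU
  have hWX := le_of_abs_le (abs_minner_le (X := X) hW)
  have hSX := le_of_abs_le (abs_minner_le (X := X) fun i j =>
    hS ▸ abs_QTmap_apply_le e hlam hZ i j)
  rw [minner_add_Bmap hX, gfun]
  linarith

end LevelSet

theorem stmt_3_general {n m : ℕ} (hn : 2 ≤ n)
    (e : Fin (n * (n - 1) / 2) ≃ {p : Fin n × Fin n // p.1 < p.2})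
    (μ ρ lam : ℝ) (hμ : 0 < μ) (hlam : 0 < lam)
    (C : Matrix (Fin n) (Fin n) ℝ)
    (b : Fin m → ℝ) (A : Fin m → Matrix (Fin n) (Fin n) ℝ)
    (hfeas : ∃ Xhat : Matrix (Fin n) (Fin n) ℝ, Xhat.PosDef ∧ AAmap A Xhat = b)
    (U0 : (Fin m → ℝ) × Matrix (Fin n) (Fin n) ℝ × Matrix (Fin n) (Fin n) ℝ)
    (L : Set ((Fin m → ℝ) × Matrix (Fin n) (Fin n) ℝ × Matrix (Fin n) (Fin n) ℝ))
    (hL : L = {U ∈ Fset ρ lam e A C | gfun A b C μ U0 ≤ gfun A b C μ U}) :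
    (∃ R : ℝ, ∀ U ∈ L, frobNorm (XofU A C μ U) ≤ R) ∧
    ∃ βmin βmax : ℝ, 0 < βmin ∧ βmin ≤ βmax ∧
      ∀ U ∈ L,
        (XofU A C μ U - βmin • (1 : Matrix (Fin n) (Fin n) ℝ)).PosSemidef ∧
        (βmax • (1 : Matrix (Fin n) (Fin n) ℝ) - XofU A C μ U).PosSemidef := by
  obtain ⟨Xhat, hXhat, hXb⟩ := hfeas
  have : Nonempty (Fin n) := ⟨⟨0, by omega⟩⟩
  obtain ⟨c, hc, hcX⟩ := hXhat.exists_pos_posSemidef_sub_smul_one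
  obtain ⟨a, β, ha, haβ, hbounds⟩ :=
    exists_spectrum_bounds_of_mul_trace_sub_mul_log_det_le (ι := Fin n) hc hμ
      (minner Xhat C + (∑ i, ∑ j, |Xhat i j|) * (ρ / 2 + 2 * ((n * (n - 1) / 2 : ℕ) : ℝ) * lam)
        + n * μ - n * μ * Real.log μ - gfun A b C μ U0)
  have hX : ∀ U ∈ L, (XofU A C μ U).IsHermitian ∧
      ∀ x ∈ spectrum ℝ (XofU A C μ U), μ / β ≤ x ∧ x ≤ μ / a := by
    intro U hU
    rw [hL] at hU
    obtain ⟨⟨hM, hP⟩, hg⟩ := hU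
    have htrace := mul_trace_le_minner hcX hP.posSemidef
    have hlevel := minner_sub_mul_log_det_le hXb C μ hlam.le e hM
    have hPspec := hbounds _ hP (by linarith)
    refine ⟨hP.inv.isHermitian.smul (IsSelfAdjoint.all μ), ?_⟩
    rw [XofU, hP.spectrum_smul_inv]
    rintro _ ⟨x, hx, rfl⟩
    exact ⟨div_le_div_of_nonneg_left hμ.le (ha.trans_le (hPspec x hx).1) (hPspec x hx).2,
      div_le_div_of_nonneg_left hμ.le ha (hPspec x hx).1⟩
  have hβ : 0 < μ / β := div_pos hμ (ha.trans_le haβ)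
  refine ⟨⟨√(n * (μ / a) ^ 2), fun U hU => frobNorm_le_of_spectrum (hX U hU).1 fun x hx => ?_⟩,
    μ / β, μ / a, hβ, div_le_div_of_nonneg_left hμ.le ha haβ, fun U hU =>
    ⟨(hX U hU).1.posSemidef_sub_smul_one fun x hx => ((hX U hU).2 x hx).1,
      (hX U hU).1.posSemidef_smul_one_sub fun x hx => ((hX U hU).2 x hx).2⟩⟩
  obtain ⟨hlo, hhi⟩ := (hX U hU).2 x hx
  exact pow_le_pow_left₀ (hβ.le.trans hlo) hhi 2

/-- Assumption 1: for `U⁰ ∈ F` and `L = {U ∈ F : g(U) ≥ g(U⁰)}`, the set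
`{X(U) : U ∈ L}` is bounded; moreover there are `0 < β_min ≤ β_max` with
`β_min I ⪯ X(U) ⪯ β_max I` for all `U ∈ L`. -/
theorem stmt_3 {n m : ℕ} (hn : 2 ≤ n)
    (e : Fin (n * (n - 1) / 2) ≃ {p : Fin n × Fin n // p.1 < p.2})
    (μ ρ lam : ℝ) (hμ : 0 < μ) (hρ : 0 < ρ) (hlam : 0 < lam)
    (C : Matrix (Fin n) (Fin n) ℝ) (hC : C.IsSymm)
    (b : Fin m → ℝ) (A : Fin m → Matrix (Fin n) (Fin n) ℝ) (hA : ∀ i, (A i).IsSymm)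
    (hsurj : ∀ v : Fin m → ℝ, ∃ X : Matrix (Fin n) (Fin n) ℝ, X.IsSymm ∧ AAmap A X = v)
    (hfeas : ∃ Xhat : Matrix (Fin n) (Fin n) ℝ, Xhat.PosDef ∧ AAmap A Xhat = b)
    (hFne : (Fset ρ lam e A C).Nonempty)
    (U0 : (Fin m → ℝ) × Matrix (Fin n) (Fin n) ℝ × Matrix (Fin n) (Fin n) ℝ)
    (hU0 : U0 ∈ Fset ρ lam e A C)
    (L : Set ((Fin m → ℝ) × Matrix (Fin n) (Fin n) ℝ × Matrix (Fin n) (Fin n) ℝ))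
    (hL : L = {U ∈ Fset ρ lam e A C | gfun A b C μ U0 ≤ gfun A b C μ U}) :
    (∃ R : ℝ, ∀ U ∈ L, frobNorm (XofU A C μ U) ≤ R) ∧
    ∃ βmin βmax : ℝ, 0 < βmin ∧ βmin ≤ βmax ∧
      ∀ U ∈ L,
        (XofU A C μ U - βmin • (1 : Matrix (Fin n) (Fin n) ℝ)).PosSemidef ∧
        (βmax • (1 : Matrix (Fin n) (Fin n) ℝ) - XofU A C μ U).PosSemidef :=
  stmt_3_general hn e μ ρ lam hμ hlam C b A hfeas U0 L hL
end
end

section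
/- Let n ≥ 2, λ > 0, X ∈ S^n and S ∈ 𝒮. Let Ŝ := P_𝒮(S + X), ΔS := Ŝ − S, and let E ∈ S^n̄ be the sign matrix of Q(X). Then | λ·Σ_{1≤i<j≤n} Σ_{1≤s<t≤n} |X_{ij} − X_{st}| − S • X | ≤ ‖ΔS‖_F · ( ‖λ·Qᵀ(E) − Ŝ‖_F + ‖X‖_F ). -/
/-!
With `E = sign Q(X)`, the matrix `T = λ Qᵀ(E)` lies in `𝒮` and maximizes `W ↦ W • X` over `𝒮`:
for `W = Qᵀ(Z)` with `|Z_ab| ≤ λ` one has `W • X = Z • Q(X) ≤ λ Σ |Q(X)_ab| = T • X`, and this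
maximum is the clustering penalty. Split `T • X − S • X = (T − Ŝ) • X + ΔS • X`. The first term
is nonnegative by maximality of `T`, and the variational inequality `(S + X − Ŝ) • (T − Ŝ) ≤ 0`
of the projection bounds it by `ΔS • (T − Ŝ)`; Cauchy–Schwarz finishes. After flattening
matrices into Euclidean space, `•` and `‖·‖_F` become an inner product and its norm, and the
last two steps are a fact about convex sets in any real inner product space.
-/

open Matrix

noncomputable section

open scoped RealInnerProductSpace

section InnerProductSpace
variable {F : Type*} [NormedAddCommGroup F] [InnerProductSpace ℝ F]

theorem IsMinOn.real_inner_sub_le_zero {K : Set F} (hK : Convex ℝ K) {u v w : F} (hv : v ∈ K)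
    (hmin : IsMinOn (fun w => ‖u - w‖) K v) (hw : w ∈ K) : ⟪u - v, w - v⟫ ≤ 0 := by
  have : Nonempty K := ⟨⟨v, hv⟩⟩
  refine (norm_eq_iInf_iff_real_inner_le_zero hK hv).1 ?_ w hw
  refine le_antisymm (le_ciInf fun w => isMinOn_iff.1 hmin w w.2) ?_
  exact ciInf_le (f := fun w : K => ‖u - w‖) ⟨0, by rintro _ ⟨w, rfl⟩; exact norm_nonneg _⟩
    ⟨v, hv⟩

theorem abs_inner_sub_inner_le_of_isMinOn_of_isMaxOn {K : Set F} (hK : Convex ℝ K)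
    {s x v t : F} (hv : v ∈ K) (hmin : IsMinOn (fun w => ‖s + x - w‖) K v) (ht : t ∈ K)
    (hmax : IsMaxOn (fun w => ⟪w, x⟫) K t) :
    |⟪t, x⟫ - ⟪s, x⟫| ≤ ‖v - s‖ * (‖t - v‖ + ‖x‖) := by
  have hgap : 0 ≤ ⟪t - v, x⟫ := by
    rw [inner_sub_left, sub_nonneg]; exact isMaxOn_iff.1 hmax v hv
  have hgap_le : ⟪t - v, x⟫ ≤ ‖v - s‖ * ‖t - v‖ := by
    have hvar := hmin.real_inner_sub_le_zero hK hv ht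
    rw [show s + x - v = x - (v - s) by abel, inner_sub_left, real_inner_comm] at hvar
    linarith [real_inner_le_norm (v - s) (t - v)]
  have hdrift := abs_real_inner_le_norm (v - s) x
  rw [show ⟪t, x⟫ - ⟪s, x⟫ = ⟪t - v, x⟫ + ⟪v - s, x⟫ by simp only [inner_sub_left]; ring]
  calc |⟪t - v, x⟫ + ⟪v - s, x⟫| ≤ ⟪t - v, x⟫ + |⟪v - s, x⟫| := by
        grw [abs_add_le, abs_of_nonneg hgap]
    _ ≤ ‖v - s‖ * (‖t - v‖ + ‖x‖) := by linarith

end InnerProductSpace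

def frobVec {k : ℕ} : Matrix (Fin k) (Fin k) ℝ →ₗ[ℝ] EuclideanSpace ℝ (Fin k × Fin k) where
  toFun A := WithLp.toLp 2 fun p => A p.1 p.2
  map_add' _ _ := rfl
  map_smul' _ _ := rfl

section Frobenius
variable {k : ℕ} (A B : Matrix (Fin k) (Fin k) ℝ)

@[simp]
theorem frobVec_apply (p : Fin k × Fin k) : frobVec A p = A p.1 p.2 := rfl

theorem frobNorm_eq_norm_frobVec : frobNorm A = ‖frobVec A‖ := by
  simp [frobNorm, EuclideanSpace.norm_eq, Fintype.sum_prod_type]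

theorem minner_eq_inner_frobVec : minner A B = ⟪frobVec A, frobVec B⟫ := by
  simp [minner, PiLp.inner_apply, Fintype.sum_prod_type, mul_comm]

theorem minner_smul_left (c : ℝ) : minner (c • A) B = c * minner A B := by
  simp [minner, Finset.mul_sum, mul_assoc]

end Frobenius

section UpperSums
variable {ι M : Type*} [Fintype ι] [LinearOrder ι] [AddCommMonoid M]

theorem sum_upper_eq_sum_equiv {κ : Type*} [Fintype κ] (e : κ ≃ {p : ι × ι // p.1 < p.2})
    (f : ι → ι → M) :
    ∑ i, ∑ j, (if i < j then f i j else 0) = ∑ a, f (e a).1.1 (e a).1.2 := by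
  rw [← Finset.sum_product' (f := fun i j => if i < j then f i j else 0),
    Finset.univ_product_univ, ← Finset.sum_filter,
    e.sum_comp (fun q : {p : ι × ι // p.1 < p.2} => f q.1.1 q.1.2),
    Finset.sum_subtype (p := fun p : ι × ι => p.1 < p.2) _ (by simp) (fun p : ι × ι => f p.1 p.2)]

theorem sum_sum_eq_two_mul_sum_upper {F : ι → ι → ℝ} (hF : ∀ i j, F i j = F j i)
    (hdiag : ∀ i, F i i = 0) :
    ∑ i, ∑ j, F i j = 2 * ∑ i, ∑ j, (if i < j then F i j else 0) := by
  have hsplit (i j : ι) : F i j = (if i < j then F i j else 0) + (if j < i then F j i else 0) := by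
    rcases lt_trichotomy i j with h | rfl | h
    · simp [h, h.not_gt]
    · simp [hdiag]
    · simp [h, h.not_gt, hF i j]
  rw [Finset.sum_congr rfl fun i _ => Finset.sum_congr rfl fun j _ => hsplit i j]
  simp only [Finset.sum_add_distrib]
  rw [Finset.sum_comm (f := fun i j => if j < i then F j i else 0), two_mul]

end UpperSums

namespace Real

theorem sign_mul_self_eq_abs (x : ℝ) : sign x * x = |x| := by
  rcases lt_trichotomy x 0 with h | rfl | h
  · simp [sign_of_neg h, abs_of_neg h]
  · simp
  · simp [sign_of_pos h, abs_of_pos h]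

theorem abs_sign_le_one (x : ℝ) : |sign x| ≤ 1 := by
  rcases sign_apply_eq x with h | h | h <;> simp [h]

end Real

section QMaps
variable {n : ℕ} (e : Fin (n * (n - 1) / 2) ≃ {p : Fin n × Fin n // p.1 < p.2})

theorem Qmap_isSymm (X : Matrix (Fin n) (Fin n) ℝ) : (Qmap e X).IsSymm := by
  refine Matrix.ext fun a b => ?_
  simp only [Matrix.transpose_apply, Qmap]
  rcases lt_trichotomy a b with h | rfl | h
  · simp [h, h.not_gt]
  · simp
  · simp [h, h.not_gt]

theorem abs_Qmap_apply (X : Matrix (Fin n) (Fin n) ℝ) (a b : Fin (n * (n - 1) / 2)) :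
    |Qmap e X a b| = |X (e a).1.1 (e a).1.2 - X (e b).1.1 (e b).1.2| := by
  simp only [Qmap]
  rcases lt_trichotomy a b with h | rfl | h
  · simp [h]
  · simp
  · simp [h, h.not_gt, abs_sub_comm]

theorem QTmap_symm (Z : Matrix (Fin (n * (n - 1) / 2)) (Fin (n * (n - 1) / 2)) ℝ)
    (i j : Fin n) : QTmap e Z i j = QTmap e Z j i := by
  simp only [QTmap]
  rcases lt_trichotomy i j with h | rfl | h
  · simp [h, h.not_gt]
  · simp
  · simp [h, h.not_gt]

theorem QTmap_apply_equiv (Z : Matrix (Fin (n * (n - 1) / 2)) (Fin (n * (n - 1) / 2)) ℝ)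
    (a : Fin (n * (n - 1) / 2)) :
    QTmap e Z (e a).1.1 (e a).1.2
      = (∑ b, if a < b then Z a b else 0) - ∑ b, if b < a then Z b a else 0 := by
  simp [QTmap, (e a).2]

theorem QTmap_smul_add_smul (c d : ℝ)
    (Z W : Matrix (Fin (n * (n - 1) / 2)) (Fin (n * (n - 1) / 2)) ℝ) :
    QTmap e (c • Z + d • W) = c • QTmap e Z + d • QTmap e W := by
  ext i j
  have hite (p : Prop) [Decidable p] (z w : ℝ) :
      (if p then c * z + d * w else 0) = c * (if p then z else 0) + d * (if p then w else 0) := by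
    split_ifs <;> simp
  simp only [QTmap, Matrix.add_apply, Matrix.smul_apply, smul_eq_mul]
  split_ifs
  · simp only [hite, Finset.sum_add_distrib, ← Finset.mul_sum]; ring
  · simp only [hite, Finset.sum_add_distrib, ← Finset.mul_sum]; ring
  · simp

theorem QTmap_smul (c : ℝ) (Z : Matrix (Fin (n * (n - 1) / 2)) (Fin (n * (n - 1) / 2)) ℝ) :
    QTmap e (c • Z) = c • QTmap e Z := by
  simpa using QTmap_smul_add_smul e c 0 Z Z

theorem minner_QTmap_eq_minner_Qmap {Z : Matrix (Fin (n * (n - 1) / 2)) (Fin (n * (n - 1) / 2)) ℝ}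
    (hZ : Z.IsSymm) {X : Matrix (Fin n) (Fin n) ℝ} (hX : X.IsSymm) :
    minner (QTmap e Z) X = minner Z (Qmap e X) := by
  set x : Fin (n * (n - 1) / 2) → ℝ := fun a => X (e a).1.1 (e a).1.2
  have hL : minner (QTmap e Z) X = 2 * ∑ a,
      ((∑ b, if a < b then Z a b else 0) - ∑ b, if b < a then Z b a else 0) * x a := by
    rw [minner, sum_sum_eq_two_mul_sum_upper (fun i j => by rw [QTmap_symm, hX.apply])
      (fun i => by simp [QTmap]), sum_upper_eq_sum_equiv e (fun i j => QTmap e Z i j * X i j)]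
    simp only [QTmap_apply_equiv, x]
  have hR : minner Z (Qmap e X) = 2 * ∑ a, ∑ b, (if a < b then Z a b else 0) * (x a - x b) := by
    rw [minner, sum_sum_eq_two_mul_sum_upper (fun a b => by rw [hZ.apply, (Qmap_isSymm e X).apply])
      (fun a => by simp [Qmap])]
    congr 1
    refine Finset.sum_congr rfl fun a _ => Finset.sum_congr rfl fun b _ => ?_
    by_cases h : a < b <;> simp [h, Qmap, x]
  rw [hL, hR]
  simp only [sub_mul, mul_sub, Finset.sum_mul, Finset.sum_sub_distrib, ite_mul, zero_mul]
  rw [Finset.sum_comm (f := fun a b => if b < a then Z b a * x a else 0)]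

theorem sum_abs_sub_eq_sum_abs_Qmap (X : Matrix (Fin n) (Fin n) ℝ) :
    (∑ i : Fin n, ∑ j : Fin n, ∑ s : Fin n, ∑ t : Fin n,
        if i < j ∧ s < t then |X i j - X s t| else 0)
      = ∑ a, ∑ b, |Qmap e X a b| := by
  simp only [ite_and, ← Finset.ite_sum_zero]
  simp only [sum_upper_eq_sum_equiv e, abs_Qmap_apply]

end QMaps

section Sset
variable {n : ℕ} {lam : ℝ} (e : Fin (n * (n - 1) / 2) ≃ {p : Fin n × Fin n // p.1 < p.2})

theorem convex_Sset : Convex ℝ (Sset lam e) := by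
  rintro _ ⟨Z, hZ, hZle, rfl⟩ _ ⟨W, hW, hWle, rfl⟩ c d hc hd hcd
  refine ⟨c • Z + d • W, (hZ.smul c).add (hW.smul d), fun a b => ?_,
    (QTmap_smul_add_smul e c d Z W).symm⟩
  calc |(c • Z + d • W) a b| ≤ c * |Z a b| + d * |W a b| := by
        simpa [abs_mul, abs_of_nonneg hc, abs_of_nonneg hd] using abs_add_le (c * Z a b) (d * W a b)
    _ ≤ c * lam + d * lam := by gcongr; exacts [hZle a b, hWle a b]
    _ = lam := by rw [← add_mul, hcd, one_mul]

theorem minner_le_of_mem_Sset {S X : Matrix (Fin n) (Fin n) ℝ} (hS : S ∈ Sset lam e)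
    (hX : X.IsSymm) : minner S X ≤ lam * ∑ a, ∑ b, |Qmap e X a b| := by
  obtain ⟨Z, hZ, hZle, rfl⟩ := hS
  rw [minner_QTmap_eq_minner_Qmap e hZ hX, minner]
  simp only [Finset.mul_sum]
  refine Finset.sum_le_sum fun a _ => Finset.sum_le_sum fun b _ => ?_
  calc Z a b * Qmap e X a b ≤ |Z a b| * |Qmap e X a b| := (le_abs_self _).trans (abs_mul _ _).le
    _ ≤ lam * |Qmap e X a b| := by gcongr; exact hZle a b

theorem smul_QTmap_sign_mem_Sset (X : Matrix (Fin n) (Fin n) ℝ) (hlam : 0 ≤ lam) :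
    lam • QTmap e ((Qmap e X).map Real.sign) ∈ Sset lam e := by
  refine ⟨lam • (Qmap e X).map Real.sign, ((Qmap_isSymm e X).map _).smul lam, fun a b => ?_,
    (QTmap_smul e _ _).symm⟩
  simpa [abs_mul, abs_of_nonneg hlam] using
    mul_le_mul_of_nonneg_left (Real.abs_sign_le_one (Qmap e X a b)) hlam

theorem minner_smul_QTmap_sign {X : Matrix (Fin n) (Fin n) ℝ} (hX : X.IsSymm) :
    minner (lam • QTmap e ((Qmap e X).map Real.sign)) X = lam * ∑ a, ∑ b, |Qmap e X a b| := by
  rw [minner_smul_left, minner_QTmap_eq_minner_Qmap e ((Qmap_isSymm e X).map _) hX]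
  simp [minner, Real.sign_mul_self_eq_abs]

end Sset

theorem stmt_19_general {n : ℕ} (lam : ℝ) (hlam : 0 < lam)
    (e : Fin (n * (n - 1) / 2) ≃ {p : Fin n × Fin n // p.1 < p.2})
    (X S : Matrix (Fin n) (Fin n) ℝ) (hX : X.IsSymm)
    (P : Matrix (Fin n) (Fin n) ℝ → Matrix (Fin n) (Fin n) ℝ)
    (hP : ∀ M : Matrix (Fin n) (Fin n) ℝ, P M ∈ Sset lam e ∧
      ∀ T ∈ Sset lam e, frobNorm (M - P M) ≤ frobNorm (M - T))
    (Shat : Matrix (Fin n) (Fin n) ℝ) (hShat : Shat = P (S + X))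
    (ΔS : Matrix (Fin n) (Fin n) ℝ) (hΔS : ΔS = Shat - S)
    (E : Matrix (Fin (n * (n - 1) / 2)) (Fin (n * (n - 1) / 2)) ℝ)
    (hE : ∀ a b, E a b = Real.sign (Qmap e X a b)) :
    |lam * (∑ i : Fin n, ∑ j : Fin n, ∑ s : Fin n, ∑ t : Fin n,
        if i < j ∧ s < t then |X i j - X s t| else 0) - minner S X| ≤
      frobNorm ΔS * (frobNorm (lam • QTmap e E - Shat) + frobNorm X) := by
  obtain rfl : E = (Qmap e X).map Real.sign := Matrix.ext hE
  subst hShat hΔS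
  have hmin : IsMinOn (fun w => ‖frobVec S + frobVec X - w‖) (frobVec '' Sset lam e)
      (frobVec (P (S + X))) :=
    isMinOn_iff.2 <| Set.forall_mem_image.2 fun W hW => by
      simpa [frobNorm_eq_norm_frobVec] using (hP (S + X)).2 W hW
  have hmax : IsMaxOn (fun w => ⟪w, frobVec X⟫) (frobVec '' Sset lam e)
      (frobVec (lam • QTmap e ((Qmap e X).map Real.sign))) :=
    isMaxOn_iff.2 <| Set.forall_mem_image.2 fun W hW => by
      simpa only [minner_eq_inner_frobVec] using
        (minner_le_of_mem_Sset e hW hX).trans_eq (minner_smul_QTmap_sign e hX).symm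
  rw [sum_abs_sub_eq_sum_abs_Qmap e X, ← minner_smul_QTmap_sign e hX]
  simp only [minner_eq_inner_frobVec, frobNorm_eq_norm_frobVec, map_sub]
  exact abs_inner_sub_inner_le_of_isMinOn_of_isMaxOn ((convex_Sset e).linear_image frobVec)
    (Set.mem_image_of_mem _ (hP (S + X)).1) hmin
    (Set.mem_image_of_mem _ (smul_QTmap_sign_mem_Sset e X hlam.le)) hmax

/-- for `X ∈ S^n`, `S ∈ 𝒮`, `Ŝ = P_𝒮(S + X)`, `ΔS = Ŝ − S`, and `E` the
sign matrix of `Q(X)`,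
`|λ Σ_{i<j} Σ_{s<t} |X_{ij} − X_{st}| − S • X| ≤ ‖ΔS‖_F (‖λ Qᵀ(E) − Ŝ‖_F + ‖X‖_F)`. -/
theorem stmt_19 {n : ℕ} (hn : 2 ≤ n) (lam : ℝ) (hlam : 0 < lam)
    (e : Fin (n * (n - 1) / 2) ≃ {p : Fin n × Fin n // p.1 < p.2})
    (X S : Matrix (Fin n) (Fin n) ℝ) (hX : X.IsSymm) (hS : S ∈ Sset lam e)
    (P : Matrix (Fin n) (Fin n) ℝ → Matrix (Fin n) (Fin n) ℝ)
    (hP : ∀ M : Matrix (Fin n) (Fin n) ℝ, P M ∈ Sset lam e ∧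
      ∀ T ∈ Sset lam e, frobNorm (M - P M) ≤ frobNorm (M - T))
    (Shat : Matrix (Fin n) (Fin n) ℝ) (hShat : Shat = P (S + X))
    (ΔS : Matrix (Fin n) (Fin n) ℝ) (hΔS : ΔS = Shat - S)
    (E : Matrix (Fin (n * (n - 1) / 2)) (Fin (n * (n - 1) / 2)) ℝ)
    (hE : ∀ a b, E a b = Real.sign (Qmap e X a b)) :
    |lam * (∑ i : Fin n, ∑ j : Fin n, ∑ s : Fin n, ∑ t : Fin n,
        if i < j ∧ s < t then |X i j - X s t| else 0) - minner S X| ≤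
      frobNorm ΔS * (frobNorm (lam • QTmap e E - Shat) + frobNorm X) :=
  stmt_19_general lam hlam e X S hX P hP Shat hShat ΔS hΔS E hE
end
end
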